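/- arXiv:2309.09411 — 8 statements merged into one kernel-verified Lean document; each statement's English description precedes it below -/
import Mathlib

section
/- Let f : ℝⁿ → ℝ be differentiable and β-smooth with β > 0, suppose f attains its infimum f* = inf f and its set of minimizers X* = {x : f(x) = f*} is nonempty, and suppose f satisfies the Polyak–Łojasiewicz (PL) condition with constant μ > 0, i.e., (1/2)‖∇f(x)‖² ≥ μ(f(x) − f*) for every x ∈ ℝⁿ. Then for every x ∈ ℝⁿ, (μ/2)·dist(x, X*)² ≤ f(x) − f* ≤ (β/2)·dist(x, X*)², where dist(x, X*) = inf_{y ∈ X*} ‖x − y‖. -/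
/-! The upper bound is the descent lemma `f x ≤ f y + (β/2)‖x - y‖²` at a minimizer `y`,
where `∇f y = 0`.

For the lower bound, run gradient descent with step `h < 2/β` from `x`. By the descent lemma
and the PL inequality, the length `h‖∇f p‖` of each step is at most `(1 - βh/2)⁻¹` times the
decrease of `√(2(f p - f*)/μ)`. So the path has finite length, the iterates converge to a
point `z` with `∇f z = 0`, which is a minimizer by PL, and
`dist(x, z) ≤ (1 - βh/2)⁻¹ √(2(f x - f*)/μ)`. Letting `h → 0` gives `dist(x, X*)² ≤ 2(f x - f*)/μ`. -/

open Filter Topology Metric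
open scoped RealInnerProductSpace

theorem mul_le_sqrt_sub_sqrt {μ a G e e' : ℝ} (hμ : 0 < μ) (ha : 0 ≤ a) (hG : 0 ≤ G)
    (he' : 0 ≤ e') (hdesc : e' ≤ e - a * G ^ 2) (hPL : μ * e ≤ 1 / 2 * G ^ 2) :
    a * G ≤ √(2 * e / μ) - √(2 * e' / μ) := by
  set r := √(2 * e / μ)
  set r' := √(2 * e' / μ)
  have he : 0 ≤ e := by nlinarith
  have hr_sq : r ^ 2 = 2 * e / μ := Real.sq_sqrt (by positivity)
  have hr'_sq : r' ^ 2 = 2 * e' / μ := Real.sq_sqrt (by positivity)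
  have hr'r : r' ≤ r := Real.sqrt_le_sqrt (by gcongr; nlinarith)
  have hμr : μ * r ≤ G := by
    refine (pow_le_pow_iff_left₀ (by positivity) hG two_ne_zero).1 ?_
    rw [mul_pow, hr_sq]
    field_simp
    linarith
  have hsq_sub : μ * ((r + r') * (r - r')) = 2 * (e - e') := by
    rw [← sq_sub_sq, hr_sq, hr'_sq]; field_simp
  -- `μ (r + r') ≤ 2 G` turns the difference of squares into a difference of square roots
  have key : G * (a * G) ≤ G * (r - r') := by
    nlinarith [mul_le_mul_of_nonneg_left (show μ * (r + r') ≤ 2 * G by nlinarith)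
      (sub_nonneg.2 hr'r)]
  rcases hG.eq_or_lt with rfl | hGpos
  · simpa using sub_nonneg.2 hr'r
  · exact le_of_mul_le_mul_left key hGpos

theorem exists_tendsto_dist_le_of_dist_le_sub {E : Type*} [PseudoMetricSpace E]
    [CompleteSpace E] {X : ℕ → E} {V : ℕ → ℝ} (hV : ∀ k, 0 ≤ V k)
    (hX : ∀ k, dist (X k) (X (k + 1)) ≤ V k - V (k + 1)) :
    ∃ z, Tendsto X atTop (𝓝 z) ∧ dist (X 0) z ≤ V 0 := by
  set d := fun k ↦ dist (X k) (X (k + 1))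
  have hpartial : ∀ n, ∑ k ∈ Finset.range n, d k ≤ V 0 := fun n ↦
    calc ∑ k ∈ Finset.range n, d k ≤ ∑ k ∈ Finset.range n, (V k - V (k + 1)) :=
          Finset.sum_le_sum fun k _ ↦ hX k
      _ = V 0 - V n := Finset.sum_range_sub' V n
      _ ≤ V 0 := sub_le_self _ (hV n)
  have hd : Summable d := summable_of_sum_range_le (fun _ ↦ dist_nonneg) hpartial
  obtain ⟨z, hz⟩ :=
    cauchySeq_tendsto_of_complete (cauchySeq_of_dist_le_of_summable d (fun _ ↦ le_rfl) hd)
  exact ⟨z, hz, (dist_le_tsum_of_dist_le_of_tendsto₀ d (fun _ ↦ le_rfl) hd hz).trans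
    (Real.tsum_le_of_sum_range_le (fun _ ↦ dist_nonneg) hpartial)⟩
section Smooth

variable {F : Type*} [NormedAddCommGroup F] [InnerProductSpace ℝ F] [CompleteSpace F]
  {f : F → ℝ} {β : ℝ}

theorem le_add_inner_gradient_add_sq (hdiff : Differentiable ℝ f)
    (hsmooth : ∀ u v, ‖gradient f u - gradient f v‖ ≤ β * ‖u - v‖) (x y : F) :
    f y ≤ f x + ⟪gradient f x, y - x⟫ + β / 2 * ‖y - x‖ ^ 2 := by
  set v := y - x with hv
  set φ : ℝ → ℝ := fun t ↦ f (x + t • v) - t * ⟪gradient f x, v⟫ - β / 2 * ‖v‖ ^ 2 * t ^ 2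
  have hφ : ∀ t,
      HasDerivAt φ (⟪gradient f (x + t • v) - gradient f x, v⟫ - β * ‖v‖ ^ 2 * t) t := by
    intro t
    have hline : HasDerivAt (fun s : ℝ ↦ x + s • v) v t := by
      simpa using ((hasDerivAt_id t).smul_const v).const_add x
    refine ((((hdiff _).hasGradientAt.hasFDerivAt.comp_hasDerivAt t hline).sub
      ((hasDerivAt_id t).mul_const ⟪gradient f x, v⟫)).sub
      ((hasDerivAt_pow 2 t).const_mul (β / 2 * ‖v‖ ^ 2))).congr_deriv ?_
    simp only [InnerProductSpace.toDual_apply_apply, inner_sub_left]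
    ring
  have hφ'_nonpos : ∀ t ∈ interior (Set.Ici (0 : ℝ)),
      ⟪gradient f (x + t • v) - gradient f x, v⟫ - β * ‖v‖ ^ 2 * t ≤ 0 := by
    intro t ht
    rw [interior_Ici] at ht
    rw [sub_nonpos]
    calc ⟪gradient f (x + t • v) - gradient f x, v⟫
        ≤ ‖gradient f (x + t • v) - gradient f x‖ * ‖v‖ := real_inner_le_norm _ _
      _ ≤ β * ‖t • v‖ * ‖v‖ := by
          gcongr
          simpa using hsmooth (x + t • v) x
      _ = β * ‖v‖ ^ 2 * t := by
          rw [norm_smul, Real.norm_of_nonneg ht.le]; ring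
  have hanti : AntitoneOn φ (Set.Ici 0) :=
    antitoneOn_of_hasDerivWithinAt_nonpos (convex_Ici 0)
      (fun t _ ↦ (hφ t).continuousAt.continuousWithinAt)
      (fun t _ ↦ (hφ t).hasDerivWithinAt) hφ'_nonpos
  have := hanti Set.self_mem_Ici (zero_le_one' ℝ) zero_le_one
  simp only [φ, zero_smul, add_zero, one_smul, hv, add_sub_cancel] at this
  linarith

theorem gradient_eq_zero_of_forall_le {y : F} (h : ∀ z, f y ≤ f z) : gradient f y = 0 := by
  show (InnerProductSpace.toDual ℝ F).symm (fderiv ℝ f y) = 0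
  rw [IsLocalMin.fderiv_eq_zero (.of_forall h), map_zero]

noncomputable def gradientStep (f : F → ℝ) (h : ℝ) (p : F) : F := p - h • gradient f p

theorem dist_gradientStep {h : ℝ} (hh : 0 ≤ h) (p : F) :
    dist p (gradientStep f h p) = h * ‖gradient f p‖ := by
  rw [gradientStep, dist_eq_norm, sub_sub_cancel, norm_smul, Real.norm_of_nonneg hh]

theorem apply_gradientStep_le (hdiff : Differentiable ℝ f)
    (hsmooth : ∀ u v, ‖gradient f u - gradient f v‖ ≤ β * ‖u - v‖) (h : ℝ) (p : F) :
    f (gradientStep f h p) ≤ f p - h * (1 - β * h / 2) * ‖gradient f p‖ ^ 2 := by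
  have := le_add_inner_gradient_add_sq hdiff hsmooth p (gradientStep f h p)
  rw [gradientStep] at this ⊢
  rw [sub_sub_cancel_left, inner_neg_right, real_inner_smul_right,
    real_inner_self_eq_norm_sq, norm_neg, norm_smul, mul_pow, Real.norm_eq_abs, sq_abs] at this
  linear_combination this

variable {μ fs : ℝ}

theorem mul_dist_gradientStep_le (hdiff : Differentiable ℝ f)
    (hsmooth : ∀ u v, ‖gradient f u - gradient f v‖ ≤ β * ‖u - v‖) (hμ : 0 < μ)
    (hlb : ∀ x, fs ≤ f x) (hPL : ∀ x, μ * (f x - fs) ≤ 1 / 2 * ‖gradient f x‖ ^ 2)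
    {h : ℝ} (hh : 0 ≤ h) (hβh : β * h ≤ 2) (p : F) :
    (1 - β * h / 2) * dist p (gradientStep f h p) ≤
      √(2 * (f p - fs) / μ) - √(2 * (f (gradientStep f h p) - fs) / μ) := by
  rw [dist_gradientStep hh, ← mul_assoc, mul_comm (1 - β * h / 2) h]
  refine mul_le_sqrt_sub_sqrt hμ (mul_nonneg hh (by linarith)) (norm_nonneg _)
    (sub_nonneg.2 (hlb _)) ?_ (hPL p)
  linarith [apply_gradientStep_le hdiff hsmooth h p]

theorem infDist_mul_le_sqrt (hdiff : Differentiable ℝ f)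
    (hsmooth : ∀ u v, ‖gradient f u - gradient f v‖ ≤ β * ‖u - v‖) (hμ : 0 < μ)
    (hlb : ∀ x, fs ≤ f x) (hPL : ∀ x, μ * (f x - fs) ≤ 1 / 2 * ‖gradient f x‖ ^ 2)
    {h : ℝ} (hh : 0 < h) (hβh : β * h < 2) (x : F) :
    infDist x {y | f y = fs} * (1 - β * h / 2) ≤ √(2 * (f x - fs) / μ) := by
  have hc : 0 < 1 - β * h / 2 := by linarith
  set X : ℕ → F := fun k ↦ (gradientStep f h)^[k] x
  have hXsucc : ∀ k, X (k + 1) = gradientStep f h (X k) := fun k ↦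
    Function.iterate_succ_apply' _ _ _
  set V : ℕ → ℝ := fun k ↦ √(2 * (f (X k) - fs) / μ) / (1 - β * h / 2)
  have hXV : ∀ k, dist (X k) (X (k + 1)) ≤ V k - V (k + 1) := by
    intro k
    rw [← sub_div, le_div_iff₀ hc, mul_comm, hXsucc]
    exact mul_dist_gradientStep_le hdiff hsmooth hμ hlb hPL hh.le hβh.le (X k)
  obtain ⟨z, hXz, hxz⟩ := exists_tendsto_dist_le_of_dist_le_sub (fun k ↦ by positivity) hXV
  have hgrad_cont : Continuous (gradient f) :=
    (LipschitzWith.of_dist_le' (K := β) (by simpa only [dist_eq_norm] using hsmooth)).continuous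
  -- along the iteration `∇f (X k) = h⁻¹ • (X k - X (k + 1))`, which tends to `h⁻¹ • (z - z) = 0`
  have hgrad_z : gradient f z = 0 := by
    refine tendsto_nhds_unique ((hgrad_cont.tendsto z).comp hXz) ?_
    have := (hXz.sub (hXz.comp (tendsto_add_atTop_nat 1))).const_smul h⁻¹
    rw [sub_self, smul_zero] at this
    refine this.congr fun k ↦ ?_
    simp only [Function.comp, hXsucc, gradientStep, sub_sub_cancel, smul_smul,
      inv_mul_cancel₀ hh.ne', one_smul]
  have hfz : f z = fs := by
    have := hPL z
    rw [hgrad_z, norm_zero] at this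
    nlinarith [hlb z]
  calc infDist x {y | f y = fs} * (1 - β * h / 2)
      ≤ dist x z * (1 - β * h / 2) := by gcongr; exact infDist_le_dist_of_mem hfz
    _ ≤ √(2 * (f x - fs) / μ) := (le_div_iff₀ hc).1 hxz

theorem infDist_le_sqrt (hdiff : Differentiable ℝ f)
    (hsmooth : ∀ u v, ‖gradient f u - gradient f v‖ ≤ β * ‖u - v‖) (hμ : 0 < μ)
    (hlb : ∀ x, fs ≤ f x) (hPL : ∀ x, μ * (f x - fs) ≤ 1 / 2 * ‖gradient f x‖ ^ 2) (x : F) :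
    infDist x {y | f y = fs} ≤ √(2 * (f x - fs) / μ) := by
  have hlim : Tendsto (fun h : ℝ ↦ infDist x {y | f y = fs} * (1 - β * h / 2)) (𝓝[>] 0)
      (𝓝 (infDist x {y | f y = fs})) := by
    have : Continuous fun h : ℝ ↦ infDist x {y | f y = fs} * (1 - β * h / 2) := by fun_prop
    simpa using (this.tendsto 0).mono_left nhdsWithin_le_nhds
  have hsmall : ∀ᶠ h in 𝓝[>] (0 : ℝ), 0 < h ∧ β * h < 2 :=
    eventually_mem_nhdsWithin.and <| nhdsWithin_le_nhds <|
      ((continuous_const_mul β).tendsto' 0 0 (mul_zero β)).eventually (gt_mem_nhds two_pos)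
  exact le_of_tendsto hlim (hsmall.mono fun h ⟨hh, hβh⟩ ↦
    infDist_mul_le_sqrt hdiff hsmooth hμ hlb hPL hh hβh x)

theorem mul_infDist_sq_le (hdiff : Differentiable ℝ f)
    (hsmooth : ∀ u v, ‖gradient f u - gradient f v‖ ≤ β * ‖u - v‖) (hμ : 0 < μ)
    (hlb : ∀ x, fs ≤ f x) (hPL : ∀ x, μ * (f x - fs) ≤ 1 / 2 * ‖gradient f x‖ ^ 2) (x : F) :
    μ / 2 * infDist x {y | f y = fs} ^ 2 ≤ f x - fs := by
  have := (Real.le_sqrt infDist_nonneg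
    (div_nonneg (mul_nonneg zero_le_two (sub_nonneg.2 (hlb x))) hμ.le)).1
    (infDist_le_sqrt hdiff hsmooth hμ hlb hPL x)
  rw [le_div_iff₀ hμ] at this
  linarith

theorem sub_le_mul_norm_sq_of_forall_le (hdiff : Differentiable ℝ f)
    (hsmooth : ∀ u v, ‖gradient f u - gradient f v‖ ≤ β * ‖u - v‖) {y : F}
    (hy : ∀ z, f y ≤ f z) (x : F) : f x - f y ≤ β / 2 * ‖x - y‖ ^ 2 := by
  have := le_add_inner_gradient_add_sq hdiff hsmooth y x
  rw [gradient_eq_zero_of_forall_le hy, inner_zero_left] at this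
  linarith

theorem sub_le_mul_infDist_sq (hdiff : Differentiable ℝ f)
    (hsmooth : ∀ u v, ‖gradient f u - gradient f v‖ ≤ β * ‖u - v‖) (hβ : 0 < β)
    (hlb : ∀ x, fs ≤ f x) (hattain : ∃ x, f x = fs) (x : F) :
    f x - fs ≤ β / 2 * infDist x {y | f y = fs} ^ 2 := by
  have hr : √(2 * (f x - fs) / β) ≤ infDist x {y | f y = fs} := by
    refine (le_infDist hattain).2 fun y (hy : f y = fs) ↦ ?_
    have := sub_le_mul_norm_sq_of_forall_le hdiff hsmooth (fun z ↦ hy ▸ hlb z) x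
    rw [Real.sqrt_le_left dist_nonneg, dist_eq_norm, div_le_iff₀ hβ]
    linarith
  rw [Real.sqrt_le_left infDist_nonneg, div_le_iff₀ hβ] at hr
  linarith

end Smooth

/-- **Two-sided bounds on losses under PL and smoothness.**
If `f : ℝⁿ → ℝ` is differentiable and `β`-smooth (`β > 0`), attains its infimum `fs`
(so its set of minimizers is nonempty), and satisfies the PL condition with constant
`μ > 0`, then for every `x`,
`(μ/2) dist(x, X*)² ≤ f x - fs ≤ (β/2) dist(x, X*)²` where `X* = {y | f y = fs}`. -/
theorem stmt1 {n : ℕ} (β μ : ℝ) (hβ : 0 < β) (hμ : 0 < μ)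
    (f : EuclideanSpace ℝ (Fin n) → ℝ)
    (hdiff : Differentiable ℝ f)
    (hsmooth : ∀ u v : EuclideanSpace ℝ (Fin n),
      ‖gradient f u - gradient f v‖ ≤ β * ‖u - v‖)
    (fs : ℝ) (hlb : ∀ x, fs ≤ f x) (hattain : ∃ x, f x = fs)
    (hPL : ∀ x, μ * (f x - fs) ≤ (1 / 2) * ‖gradient f x‖ ^ 2) :
    ∀ x : EuclideanSpace ℝ (Fin n),
      μ / 2 * (Metric.infDist x {y | f y = fs}) ^ 2 ≤ f x - fs ∧
      f x - fs ≤ β / 2 * (Metric.infDist x {y | f y = fs}) ^ 2 := fun x ↦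
  ⟨mul_infDist_sq_le hdiff hsmooth hμ hlb hPL x,
    sub_le_mul_infDist_sq hdiff hsmooth hβ hlb hattain x⟩
end

section
/- Let f, g : ℝⁿ → ℝ be differentiable functions such that: g attains its infimum g* = inf g, g satisfies the Polyak–Łojasiewicz (PL) condition with constant μ > 0, i.e., (1/2)‖∇g(x)‖² ≥ μ(g(x) − g*) for every x; f attains its infimum f* = inf f at some point x* ∈ ℝⁿ; |f(x) − g(x)| ≤ Kη for all x ∈ ℝⁿ (for constants K, η > 0); and ‖∇f(x) − ∇g(x)‖ ≤ J for all x ∈ ℝⁿ (for a constant J ≥ 0). Then f* − g* ≤ Kη + J²/(2μ). -/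
open MeasureTheory
open scoped RealInnerProductSpace BigOperators

/-- **Difference of successive optimal values.**
If `g` attains its infimum `gs` and satisfies the PL condition with constant `μ > 0`,
`f` attains its infimum `fs` at some `xstar`, `|f - g| ≤ K η` pointwise and
`‖∇f - ∇g‖ ≤ J` pointwise, then `fs - gs ≤ K η + J² / (2μ)`. -/
theorem stmt4 {n : ℕ} (μ K η J : ℝ) (hμ : 0 < μ) (hK : 0 < K) (hη : 0 < η) (hJ : 0 ≤ J)
    (f g : EuclideanSpace ℝ (Fin n) → ℝ)
    (hf : Differentiable ℝ f) (hg : Differentiable ℝ g)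
    (gs : ℝ) (hgs_lb : ∀ x, gs ≤ g x) (hgs_att : ∃ x, g x = gs)
    (hPL : ∀ x, μ * (g x - gs) ≤ (1 / 2) * ‖gradient g x‖ ^ 2)
    (fs : ℝ) (xstar : EuclideanSpace ℝ (Fin n))
    (hfs_att : f xstar = fs) (hfs_lb : ∀ x, fs ≤ f x)
    (hclose : ∀ x, |f x - g x| ≤ K * η)
    (hgrad : ∀ x, ‖gradient f x - gradient g x‖ ≤ J) :
    fs - gs ≤ K * η + J ^ 2 / (2 * μ) := by
  have hmin : IsLocalMin f xstar := by
    apply IsMinOn.isLocalMin _ (Filter.univ_mem)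
    intro x _
    simpa [hfs_att] using hfs_lb x
  have hfd : fderiv ℝ f xstar = 0 := hmin.fderiv_eq_zero
  have hgf : gradient f xstar = 0 := by
    rw [gradient, hfd, map_zero]
  have hgnorm : ‖gradient g xstar‖ ≤ J := by
    have := hgrad xstar
    rwa [hgf, zero_sub, norm_neg] at this
  have hPLx := hPL xstar
  have h1 : μ * (g xstar - gs) ≤ (1 / 2) * J ^ 2 := by
    refine hPLx.trans ?_
    have : ‖gradient g xstar‖ ^ 2 ≤ J ^ 2 :=
      pow_le_pow_left₀ (norm_nonneg _) hgnorm 2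
    linarith
  have h2 : g xstar - gs ≤ J ^ 2 / (2 * μ) := by
    rw [le_div_iff₀ (by positivity)]
    nlinarith
  have h3 : fs - g xstar ≤ K * η := by
    have := hclose xstar
    rw [abs_le] at this
    linarith [hfs_att ▸ this.2]
  linarith
end

section
/- Let f, g : ℝⁿ → ℝ be differentiable functions such that: g attains its infimum g* = inf g on a nonempty set of minimizers X_g*, g satisfies the Polyak–Łojasiewicz (PL) condition with constant μ > 0, i.e., (1/2)‖∇g(x)‖² ≥ μ(g(x) − g*) for every x, and g satisfies the quadratic growth condition (μ/2)·dist(x, X_g*)² ≤ g(x) − g* for every x; f attains its infimum at some point x* ∈ ℝⁿ; and ‖∇f(x) − ∇g(x)‖ ≤ J for all x ∈ ℝⁿ. Then dist(x*, X_g*)² ≤ J²/μ², i.e., the distance from any minimizer of f to the set of minimizers of g is at most J/μ. -/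
open MeasureTheory
open scoped RealInnerProductSpace BigOperators

/-- **Distance between successive optimal sets.**
If `g` attains its infimum `gs` on a nonempty set of minimizers `Xg`, satisfies the
PL condition with constant `μ > 0` and the quadratic growth condition
`(μ/2) dist(x, Xg)² ≤ g x - gs`, `f` attains its infimum at `xstar`, and
`‖∇f - ∇g‖ ≤ J` pointwise, then `dist(xstar, Xg)² ≤ J²/μ²`. -/
theorem stmt5 {n : ℕ} (μ J : ℝ) (hμ : 0 < μ) (hJ : 0 ≤ J)
    (f g : EuclideanSpace ℝ (Fin n) → ℝ)
    (hf : Differentiable ℝ f) (hg : Differentiable ℝ g)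
    (gs : ℝ) (hgs_lb : ∀ x, gs ≤ g x) (hgs_att : ∃ x, g x = gs)
    (hPL : ∀ x, μ * (g x - gs) ≤ (1 / 2) * ‖gradient g x‖ ^ 2)
    (hQG : ∀ x, μ / 2 * (Metric.infDist x {y | g y = gs}) ^ 2 ≤ g x - gs)
    (xstar : EuclideanSpace ℝ (Fin n)) (hfs : ∀ x, f xstar ≤ f x)
    (hgrad : ∀ x, ‖gradient f x - gradient g x‖ ≤ J) :
    (Metric.infDist xstar {y | g y = gs}) ^ 2 ≤ J ^ 2 / μ ^ 2 := by
  have hmin : IsLocalMin f xstar := by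
    apply IsMinOn.isLocalMin (s := Set.univ)
    · intro x _; exact hfs x
    · exact Filter.univ_mem
  have hfd0 : fderiv ℝ f xstar = 0 := hmin.fderiv_eq_zero
  have hgrad0 : gradient f xstar = 0 := by
    unfold gradient
    rw [hfd0]; simp
  have hgJ : ‖gradient g xstar‖ ≤ J := by
    have := hgrad xstar
    rwa [hgrad0, zero_sub, norm_neg] at this
  have h1 : μ * (g xstar - gs) ≤ (1 / 2) * J ^ 2 := by
    refine (hPL xstar).trans ?_
    have : ‖gradient g xstar‖ ^ 2 ≤ J ^ 2 :=
      pow_le_pow_left₀ (norm_nonneg _) hgJ 2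
    nlinarith
  have h2 := hQG xstar
  have := Metric.infDist_nonneg (x := xstar) (s := {y | g y = gs})
  rw [le_div_iff₀ (by positivity : (0:ℝ) < μ ^ 2)]
  nlinarith
end

section
/- Fix n ≥ 1, T ≥ 1, β > 0, μ > 0, K > 0. For t = 1, …, T let Fₜ : ℝⁿ → ℝ be differentiable, β-smooth, attain its infimum Fₜ* = inf Fₜ, and satisfy the Polyak–Łojasiewicz condition with constant μ ((1/2)‖∇Fₜ(x)‖² ≥ μ(Fₜ(x) − Fₜ*) for all x). For t = 1, …, T−1 let ηₜ > 0, Jₜ ≥ 0, σₜ ≥ 0 satisfy |Fₜ₊₁(x) − Fₜ(x)| ≤ Kηₜ for all x, and ‖∇Fₜ₊₁(x) − ∇Fₜ(x)‖ ≤ Jₜ for all x. For t = 1, …, T−1 let (Ωₜ, 𝒜ₜ, μₜ) be probability spaces and Gₜ : ℝⁿ × Ωₜ → ℝⁿ measurable maps such that for every x ∈ ℝⁿ: ∫ Gₜ(x, ω) dμₜ(ω) = ∇Fₜ(x) and ∫ ‖Gₜ(x, ω) − ∇Fₜ(x)‖² dμₜ(ω) ≤ σₜ². Fix x₁ ∈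 ℝⁿ, a step size γ ∈ (0, min(1/β, 1/(2μ))), set ζ = γ − γ²β/2, and define the online stochastic gradient descent iterates X₁ ≡ x₁ and Xₜ₊₁(ω₁, …, ωₜ) = Xₜ(ω₁, …, ωₜ₋₁) − γ Gₜ(Xₜ(ω₁, …, ωₜ₋₁), ωₜ). Assume the maps Xₜ, Fₜ(Xₜ), ‖∇Fₜ(Xₜ)‖², ‖Gₜ(Xₜ, ·)‖² and Fₜ₊₁(Xₜ₊₁) are measurable and integrable with respect to the product measures μ₁ ⊗ ⋯ ⊗ μₜ. Then Σₜ₌₁ᵀ E_{μ₁⊗⋯⊗μₜ₋₁}[Fₜ(Xₜ) − Fₜ*] ≤ (1/(2μζ))(F₁(x₁) − F₁*) + (K/(μζ)) Σₜ₌₁^{T−1} ηₜ + (1/(4μ²ζ)) Σₜ₌₁^{T−1} Jₜ² + (γβ/(2μ)) Σₜ₌₁^{T−1} σₜ². -/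
/-!
Each step of online SGD is an expected descent step for the current loss: by `β`-smoothness and
unbiasedness of the oracle, `E Fₜ(Xₜ₊₁) ≤ E Fₜ(Xₜ) - ζ E‖∇Fₜ(Xₜ)‖² + γ²βσₜ²/2`, where the
integral over the fresh sample is computed by Fubini after splitting the last coordinate off the
sample tuple. The PL inequality turns `-ζ E‖∇Fₜ(Xₜ)‖²` into `-2μζ` times the expected
suboptimality, and passing from `Fₜ` to `Fₜ₊₁` costs `Kηₜ` twice, once in value and once in the
infimum. Hence `Dₜ = E[Fₜ(Xₜ) - Fₜ*]` satisfies `Dₜ₊₁ ≤ (1 - 2μζ) Dₜ + 2Kηₜ + γ²βσₜ²/2`, and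
summing gives `2μζ Σ Dₜ ≤ D₁ + Σ (2Kηₜ + γ²βσₜ²/2)`; finally `γ²β/2 ≤ ζγβ` because `γβ ≤ 1`.
-/

open MeasureTheory
open scoped RealInnerProductSpace BigOperators

section Smooth

variable {E : Type*} [NormedAddCommGroup E] [InnerProductSpace ℝ E] [CompleteSpace E]

theorem apply_add_le_of_lipschitz_gradient {f : E → ℝ} {β : ℝ} (hf : Differentiable ℝ f)
    (hL : ∀ u v, ‖gradient f u - gradient f v‖ ≤ β * ‖u - v‖) (x d : E) :
    f (x + d) ≤ f x + ⟪gradient f x, d⟫ + β / 2 * ‖d‖ ^ 2 := by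
  set φ : ℝ → ℝ := fun s => f x + s * ⟪gradient f x, d⟫ + s ^ 2 * (β / 2 * ‖d‖ ^ 2) - f (x + s • d)
  have hφ : ∀ s, HasDerivAt φ
      (⟪gradient f x, d⟫ + s * (β * ‖d‖ ^ 2) - ⟪gradient f (x + s • d), d⟫) s := fun s => by
    have hline : HasDerivAt (fun s : ℝ => f (x + s • d)) ⟪gradient f (x + s • d), d⟫ s := by
      simpa [Function.comp_def] using (hf (x + s • d)).hasGradientAt.hasFDerivAt.comp_hasDerivAt s
        (((hasDerivAt_id s).smul_const d).const_add x)
    have hquad : HasDerivAt (fun s : ℝ => s * ⟪gradient f x, d⟫ + s ^ 2 * (β / 2 * ‖d‖ ^ 2))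
        (⟪gradient f x, d⟫ + s * (β * ‖d‖ ^ 2)) s := by
      refine (((hasDerivAt_id s).mul_const ⟪gradient f x, d⟫).add
        ((hasDerivAt_pow 2 s).mul_const (β / 2 * ‖d‖ ^ 2))).congr_deriv ?_
      simp only [one_mul]; push_cast; ring
    refine ((hquad.const_add (f x)).sub hline).congr_of_eventuallyEq (.of_forall fun r => ?_)
    simp only [φ, Pi.sub_apply]; ring
  have hmono : MonotoneOn φ (Set.Icc 0 1) := by
    refine monotoneOn_of_hasDerivWithinAt_nonneg (convex_Icc 0 1)
      (fun s _ => (hφ s).continuousAt.continuousWithinAt) (fun s _ => (hφ s).hasDerivWithinAt)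
      fun s hs => ?_
    rw [interior_Icc] at hs
    have hgrad : ⟪gradient f (x + s • d) - gradient f x, d⟫ ≤ s * (β * ‖d‖ ^ 2) :=
      calc ⟪gradient f (x + s • d) - gradient f x, d⟫
          ≤ ‖gradient f (x + s • d) - gradient f x‖ * ‖d‖ := real_inner_le_norm _ _
        _ ≤ β * ‖s • d‖ * ‖d‖ := by gcongr; simpa using hL (x + s • d) x
        _ = s * (β * ‖d‖ ^ 2) := by rw [norm_smul, Real.norm_of_nonneg hs.1.le]; ring
    rw [inner_sub_left] at hgrad
    linarith
  have h01 := hmono ⟨le_rfl, zero_le_one⟩ ⟨zero_le_one, le_rfl⟩ zero_le_one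
  simp only [φ, zero_mul, zero_smul, one_mul, one_smul, add_zero, one_pow, sub_self,
    ne_eq, OfNat.ofNat_ne_zero, not_false_eq_true, zero_pow] at h01
  linarith

end Smooth

section Expectation

variable {α : Type*} [MeasurableSpace α] {μ : Measure α}

theorem integrable_of_abs_sub_le [IsFiniteMeasure μ] {u v : α → ℝ} {c : ℝ}
    (hu : AEStronglyMeasurable u μ) (hv : Integrable v μ) (huv : ∀ a, |u a - v a| ≤ c) :
    Integrable u μ := by
  have hdiff : Integrable (fun a => u a - v a) μ :=
    (integrable_const c).mono' (hu.sub hv.1) (.of_forall huv)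
  exact (hdiff.add hv).congr (.of_forall fun a => sub_add_cancel (u a) (v a))

variable [IsProbabilityMeasure μ] {u : α → ℝ}

theorem integral_add_const (hu : Integrable u μ) (c : ℝ) :
    ∫ a, (u a + c) ∂μ = ∫ a, u a ∂μ + c := by
  rw [integral_add hu (integrable_const c), integral_const, probReal_univ, one_smul]

theorem integral_sub_const (hu : Integrable u μ) (c : ℝ) :
    ∫ a, (u a - c) ∂μ = ∫ a, u a ∂μ - c := by
  rw [integral_sub hu (integrable_const c), integral_const, probReal_univ, one_smul]

end Expectation

section Moments

variable {α E : Type*} [MeasurableSpace α] {μ : Measure α}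
  [NormedAddCommGroup E] [InnerProductSpace ℝ E]

theorem integrable_inner_of_integrable_norm_sq {u v : α → E} (hu : AEStronglyMeasurable u μ)
    (hv : AEStronglyMeasurable v μ) (hu2 : Integrable (fun a => ‖u a‖ ^ 2) μ)
    (hv2 : Integrable (fun a => ‖v a‖ ^ 2) μ) : Integrable (fun a => ⟪u a, v a⟫) μ := by
  refine ((hu2.add hv2).div_const 2).mono' (hu.inner hv) (.of_forall fun a => ?_)
  rw [Pi.add_apply, Real.norm_eq_abs]
  have := abs_real_inner_le_norm (u a) (v a)
  nlinarith [sq_nonneg (‖u a‖ - ‖v a‖)]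

theorem integral_norm_sq_eq_integral_norm_sub_sq_add [CompleteSpace E] [IsProbabilityMeasure μ]
    {g : α → E} {m : E} (hg : Integrable g μ) (hg2 : Integrable (fun a => ‖g a‖ ^ 2) μ)
    (hm : ∫ a, g a ∂μ = m) :
    ∫ a, ‖g a‖ ^ 2 ∂μ = ∫ a, ‖g a - m‖ ^ 2 ∂μ + ‖m‖ ^ 2 := by
  have hexpand : ∀ a, ‖g a - m‖ ^ 2 = ‖g a‖ ^ 2 - 2 * ⟪m, g a⟫ + ‖m‖ ^ 2 := fun a => by
    rw [norm_sub_sq_real, real_inner_comm]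
  have hcross : Integrable (fun a => 2 * ⟪m, g a⟫) μ := (hg.const_inner m).const_mul 2
  have hdiff : Integrable (fun a => ‖g a‖ ^ 2 - 2 * ⟪m, g a⟫) μ := hg2.sub hcross
  simp_rw [hexpand]
  rw [integral_add hdiff (integrable_const _), integral_sub hg2 hcross,
    integral_const_mul, integral_inner hg, hm, real_inner_self_eq_norm_sq, integral_const]
  simp only [probReal_univ, one_smul]
  ring

end Moments

section ProductStep

variable {E : Type*} [NormedAddCommGroup E] [InnerProductSpace ℝ E] [CompleteSpace E]
  {Ω S : Type*} [MeasurableSpace Ω] [MeasurableSpace S]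
  {P : Measure Ω} [IsProbabilityMeasure P] {π : Measure S} [IsProbabilityMeasure π]
  {g : E → Ω → E} {m : E → E} {x : S → E}

theorem integral_prod_inner_mean (hg : ∀ z, Integrable (g z) P)
    (hmean : ∀ z, ∫ ω, g z ω ∂P = m z)
    (hint : Integrable (fun p : Ω × S => ⟪m (x p.2), g (x p.2) p.1⟫) (P.prod π)) :
    ∫ p, ⟪m (x p.2), g (x p.2) p.1⟫ ∂(P.prod π) = ∫ y, ‖m (x y)‖ ^ 2 ∂π := by
  rw [integral_prod_symm _ hint]
  refine integral_congr_ae (.of_forall fun y => ?_)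
  simp only [integral_inner (hg (x y)), hmean, real_inner_self_eq_norm_sq]

theorem integral_prod_norm_sq_le (hg : ∀ z, Integrable (g z) P)
    (hmean : ∀ z, ∫ ω, g z ω ∂P = m z) {s2 : ℝ} (hvar : ∀ z, ∫ ω, ‖g z ω - m z‖ ^ 2 ∂P ≤ s2)
    (hm2 : Integrable (fun y => ‖m (x y)‖ ^ 2) π)
    (hg2 : Integrable (fun p : Ω × S => ‖g (x p.2) p.1‖ ^ 2) (P.prod π)) :
    ∫ p, ‖g (x p.2) p.1‖ ^ 2 ∂(P.prod π) ≤ s2 + ∫ y, ‖m (x y)‖ ^ 2 ∂π := by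
  rw [integral_prod_symm _ hg2]
  calc ∫ y, ∫ ω, ‖g (x y) ω‖ ^ 2 ∂P ∂π ≤ ∫ y, (s2 + ‖m (x y)‖ ^ 2) ∂π := by
        refine integral_mono_ae hg2.integral_prod_right ((integrable_const s2).add hm2) ?_
        filter_upwards [hg2.prod_left_ae] with y hy
        rw [integral_norm_sq_eq_integral_norm_sub_sq_add (hg (x y)) hy (hmean (x y))]
        linarith [hvar (x y)]
    _ = s2 + ∫ y, ‖m (x y)‖ ^ 2 ∂π := by
        rw [integral_add (integrable_const _) hm2, integral_const, probReal_univ, one_smul]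

theorem integral_prod_sgd_step_le [MeasurableSpace E] [BorelSpace E] [SecondCountableTopology E]
    {f : E → ℝ} {β γ s2 : ℝ} (hβ : 0 ≤ β)
    (hf : Differentiable ℝ f) (hL : ∀ u v, ‖gradient f u - gradient f v‖ ≤ β * ‖u - v‖)
    (hgmeas : Measurable (Function.uncurry g)) (hg : ∀ z, Integrable (g z) P)
    (hmean : ∀ z, ∫ ω, g z ω ∂P = gradient f z)
    (hvar : ∀ z, ∫ ω, ‖g z ω - gradient f z‖ ^ 2 ∂P ≤ s2) (hx : Measurable x)
    (hfx : Integrable (fun y => f (x y)) π)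
    (hgradx : Integrable (fun y => ‖gradient f (x y)‖ ^ 2) π)
    (hg2 : Integrable (fun p : Ω × S => ‖g (x p.2) p.1‖ ^ 2) (P.prod π))
    (hfnext : Integrable (fun p : Ω × S => f (x p.2 - γ • g (x p.2) p.1)) (P.prod π)) :
    ∫ p, f (x p.2 - γ • g (x p.2) p.1) ∂(P.prod π)
      ≤ ∫ y, f (x y) ∂π - (γ - γ ^ 2 * β / 2) * ∫ y, ‖gradient f (x y)‖ ^ 2 ∂π
        + γ ^ 2 * β / 2 * s2 := by
  have hgradc : Continuous (gradient f) :=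
    (LipschitzWith.of_dist_le' (K := β) fun u v => by
      simpa only [dist_eq_norm] using hL u v).continuous
  have hinner : Integrable (fun p : Ω × S => ⟪gradient f (x p.2), g (x p.2) p.1⟫) (P.prod π) :=
    integrable_inner_of_integrable_norm_sq
      (hgradc.measurable.comp (hx.comp measurable_snd)).aestronglyMeasurable
      (hgmeas.comp ((hx.comp measurable_snd).prodMk measurable_fst)).aestronglyMeasurable
      (hgradx.comp_snd P) hg2
  have hdescent : ∀ p : Ω × S, f (x p.2 - γ • g (x p.2) p.1) ≤ f (x p.2)
      - γ * ⟪gradient f (x p.2), g (x p.2) p.1⟫ + γ ^ 2 * β / 2 * ‖g (x p.2) p.1‖ ^ 2 := by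
    intro p
    have := apply_add_le_of_lipschitz_gradient hf hL (x p.2) (-(γ • g (x p.2) p.1))
    rw [← sub_eq_add_neg, inner_neg_right, real_inner_smul_right, norm_neg, norm_smul, mul_pow,
      Real.norm_eq_abs, sq_abs] at this
    linarith
  have hfx' : Integrable (fun p : Ω × S => f (x p.2)) (P.prod π) := hfx.comp_snd P
  have hfirst : Integrable (fun p : Ω × S => f (x p.2) - γ * ⟪gradient f (x p.2), g (x p.2) p.1⟫)
      (P.prod π) := hfx'.sub (hinner.const_mul γ)
  have hsecond : Integrable (fun p : Ω × S => γ ^ 2 * β / 2 * ‖g (x p.2) p.1‖ ^ 2) (P.prod π) :=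
    hg2.const_mul _
  have hc : 0 ≤ γ ^ 2 * β / 2 := by positivity
  calc ∫ p, f (x p.2 - γ • g (x p.2) p.1) ∂(P.prod π)
      ≤ ∫ p, (f (x p.2) - γ * ⟪gradient f (x p.2), g (x p.2) p.1⟫
          + γ ^ 2 * β / 2 * ‖g (x p.2) p.1‖ ^ 2) ∂(P.prod π) :=
        integral_mono hfnext (hfirst.add hsecond) hdescent
    _ = ∫ y, f (x y) ∂π - γ * ∫ y, ‖gradient f (x y)‖ ^ 2 ∂π
          + γ ^ 2 * β / 2 * ∫ p, ‖g (x p.2) p.1‖ ^ 2 ∂(P.prod π) := by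
        rw [integral_add hfirst hsecond, integral_sub hfx' (hinner.const_mul γ),
          integral_const_mul, integral_const_mul, integral_fun_snd (fun y => f (x y)),
          integral_prod_inner_mean hg hmean hinner, probReal_univ, one_smul]
    _ ≤ _ := by
        nlinarith [mul_le_mul_of_nonneg_left (integral_prod_norm_sq_le hg hmean hvar hgradx hg2) hc]

end ProductStep

section Tuples

variable {k : ℕ} (α : Fin (k + 1) → Type*) [∀ i, MeasurableSpace (α i)]

@[simps! apply]
def MeasurableEquiv.piFinSnoc : α (Fin.last k) × (∀ i : Fin k, α i.castSucc) ≃ᵐ ∀ i, α i where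
  toEquiv := Fin.snocEquiv α
  measurable_toFun := measurable_pi_iff.2 fun i => by
    induction i using Fin.lastCases with
    | last => simpa using measurable_fst
    | cast i => simpa using measurable_snd.eval (a := i)
  measurable_invFun :=
    (measurable_pi_apply _).prodMk (measurable_pi_lambda _ fun i => measurable_pi_apply _)

theorem measurePreserving_piFinSnoc (μ : ∀ i, Measure (α i)) [∀ i, SigmaFinite (μ i)] :
    MeasurePreserving (MeasurableEquiv.piFinSnoc α)
      ((μ (Fin.last k)).prod (Measure.pi fun i : Fin k => μ i.castSucc)) (Measure.pi μ) := by
  refine ⟨(MeasurableEquiv.piFinSnoc α).measurable, (Measure.pi_eq fun s _ => ?_).symm⟩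
  rw [MeasurableEquiv.map_apply, Fin.prod_univ_castSucc, mul_comm, ← Measure.pi_pi,
    ← Measure.prod_prod]
  congr 1 with ⟨x, f⟩
  simp [Fin.forall_iff_castSucc]

end Tuples

section SampleSequence

variable {Ω : ℕ → Type*} [∀ t, MeasurableSpace (Ω t)]

noncomputable abbrev sampleLaw (P : ∀ t, Measure (Ω t)) (k : ℕ) :
    Measure (∀ i : Fin k, Ω (i + 1)) :=
  Measure.pi fun i => P (i + 1)

variable {E : Type*} [NormedAddCommGroup E] [InnerProductSpace ℝ E] [CompleteSpace E]
  [MeasurableSpace E] [BorelSpace E] [SecondCountableTopology E]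
  {P : ∀ t, Measure (Ω t)} [∀ t, IsProbabilityMeasure (P t)]

theorem integral_pi_sgd_step_le {k : ℕ} {f : E → ℝ} {β γ s2 : ℝ} (hβ : 0 ≤ β)
    (hf : Differentiable ℝ f) (hL : ∀ u v, ‖gradient f u - gradient f v‖ ≤ β * ‖u - v‖)
    {g : E → Ω (k + 1) → E} (hgmeas : Measurable (Function.uncurry g))
    (hg : ∀ z, Integrable (g z) (P (k + 1)))
    (hmean : ∀ z, ∫ ω, g z ω ∂(P (k + 1)) = gradient f z)
    (hvar : ∀ z, ∫ ω, ‖g z ω - gradient f z‖ ^ 2 ∂(P (k + 1)) ≤ s2)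
    {x : (∀ i : Fin k, Ω (i + 1)) → E} {x' : (∀ i : Fin (k + 1), Ω (i + 1)) → E}
    (hx' : ∀ ω, x' ω = x (Fin.init ω) - γ • g (x (Fin.init ω)) (ω (Fin.last k)))
    (hx : Measurable x)
    (hfx : Integrable (fun ω => f (x ω)) (sampleLaw P k))
    (hgradx : Integrable (fun ω => ‖gradient f (x ω)‖ ^ 2) (sampleLaw P k))
    (hg2 : Integrable (fun ω => ‖g (x (Fin.init ω)) (ω (Fin.last k))‖ ^ 2)
      (sampleLaw P (k + 1)))
    (hfx' : Integrable (fun ω => f (x' ω)) (sampleLaw P (k + 1))) :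
    ∫ ω, f (x' ω) ∂(sampleLaw P (k + 1))
      ≤ ∫ ω, f (x ω) ∂(sampleLaw P k)
        - (γ - γ ^ 2 * β / 2) * ∫ ω, ‖gradient f (x ω)‖ ^ 2 ∂(sampleLaw P k)
        + γ ^ 2 * β / 2 * s2 := by
  have he := measurePreserving_piFinSnoc (fun i : Fin (k + 1) => Ω (i + 1)) (fun i => P (i + 1))
  have hcomp := fun h : (∀ i : Fin (k + 1), Ω (i + 1)) → ℝ =>
    he.integrable_comp_emb (g := h) (MeasurableEquiv.measurableEmbedding _)
  have hinit : ∀ p, Fin.init (MeasurableEquiv.piFinSnoc (fun i : Fin (k + 1) => Ω (i + 1)) p)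
      = p.2 := fun p => funext fun i => by simp [Fin.init]
  rw [← he.integral_comp']
  simp only [hx', hinit, MeasurableEquiv.piFinSnoc_apply, Fin.snoc_last]
  refine integral_prod_sgd_step_le hβ hf hL hgmeas hg hmean hvar hx hfx hgradx ?_ ?_
  · simpa [Function.comp_def, hinit] using (hcomp _).2 hg2
  · simpa [Function.comp_def, hx', hinit] using (hcomp _).2 hfx'

theorem integral_sub_inf_sgd_step_le {k : ℕ} {f f' : E → ℝ} {fs fs' β mu γ c s2 : ℝ}
    (hβ : 0 ≤ β) (hζ : 0 ≤ γ - γ ^ 2 * β / 2)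
    (hf : Differentiable ℝ f) (hL : ∀ u v, ‖gradient f u - gradient f v‖ ≤ β * ‖u - v‖)
    (hfs : ∀ z, fs ≤ f z) (hfs' : ∃ z, f' z = fs')
    (hPL : ∀ z, mu * (f z - fs) ≤ 1 / 2 * ‖gradient f z‖ ^ 2)
    (hdrift : ∀ z, |f' z - f z| ≤ c)
    {g : E → Ω (k + 1) → E} (hgmeas : Measurable (Function.uncurry g))
    (hg : ∀ z, Integrable (g z) (P (k + 1)))
    (hmean : ∀ z, ∫ ω, g z ω ∂(P (k + 1)) = gradient f z)
    (hvar : ∀ z, ∫ ω, ‖g z ω - gradient f z‖ ^ 2 ∂(P (k + 1)) ≤ s2)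
    {x : (∀ i : Fin k, Ω (i + 1)) → E} {x' : (∀ i : Fin (k + 1), Ω (i + 1)) → E}
    (hx' : ∀ ω, x' ω = x (Fin.init ω) - γ • g (x (Fin.init ω)) (ω (Fin.last k)))
    (hx : Measurable x) (hx'meas : Measurable x')
    (hfx : Integrable (fun ω => f (x ω)) (sampleLaw P k))
    (hgradx : Integrable (fun ω => ‖gradient f (x ω)‖ ^ 2) (sampleLaw P k))
    (hg2 : Integrable (fun ω => ‖g (x (Fin.init ω)) (ω (Fin.last k))‖ ^ 2)
      (sampleLaw P (k + 1)))
    (hf'x' : Integrable (fun ω => f' (x' ω)) (sampleLaw P (k + 1))) :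
    ∫ ω, (f' (x' ω) - fs') ∂(sampleLaw P (k + 1))
      ≤ (1 - 2 * mu * (γ - γ ^ 2 * β / 2)) * ∫ ω, (f (x ω) - fs) ∂(sampleLaw P k)
        + 2 * c + γ ^ 2 * β / 2 * s2 := by
  have hfx' : Integrable (fun ω => f (x' ω)) (sampleLaw P (k + 1)) :=
    integrable_of_abs_sub_le (hf.continuous.measurable.comp hx'meas).aestronglyMeasurable hf'x'
      fun ω => by rw [abs_sub_comm]; exact hdrift _
  have hdescent := integral_pi_sgd_step_le hβ hf hL hgmeas hg hmean hvar hx' hx hfx hgradx hg2 hfx'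
  have hPLE : 2 * mu * ∫ ω, (f (x ω) - fs) ∂(sampleLaw P k)
      ≤ ∫ ω, ‖gradient f (x ω)‖ ^ 2 ∂(sampleLaw P k) := by
    rw [← integral_const_mul]
    exact integral_mono ((hfx.sub (integrable_const fs)).const_mul _) hgradx
      fun ω => by linarith [hPL (x ω)]
  have hvalue_drift : ∫ ω, f' (x' ω) ∂(sampleLaw P (k + 1))
      ≤ ∫ ω, f (x' ω) ∂(sampleLaw P (k + 1)) + c := by
    rw [← integral_add_const hfx']
    exact integral_mono hf'x' (hfx'.add (integrable_const c))
      fun ω => by linarith [(abs_le.1 (hdrift (x' ω))).2]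
  obtain ⟨z, rfl⟩ := hfs'
  have hinf_drift : fs ≤ f' z + c := by linarith [hfs z, (abs_le.1 (hdrift z)).1]
  rw [integral_sub_const hfx] at hPLE ⊢
  rw [integral_sub_const hf'x']
  nlinarith [mul_le_mul_of_nonneg_left hPLE hζ]

end SampleSequence

theorem mul_sum_range_le_of_le_mul_add {D b : ℕ → ℝ} {a : ℝ} {T : ℕ} (hT : 1 ≤ T) (ha : a ≤ 1)
    (hD : ∀ k < T, 0 ≤ D k) (hrec : ∀ k, k + 1 < T → D (k + 1) ≤ (1 - a) * D k + b (k + 1)) :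
    a * ∑ k ∈ Finset.range T, D k ≤ D 0 + ∑ t ∈ Finset.Icc 1 (T - 1), b t := by
  obtain ⟨n, rfl⟩ : ∃ n, T = n + 1 := ⟨T - 1, by omega⟩
  have hreindex : ∑ t ∈ Finset.Icc 1 n, b t = ∑ k ∈ Finset.range n, b (k + 1) := by
    rw [Finset.range_eq_Ico, Finset.sum_Ico_add', ← Finset.Ico_add_one_right_eq_Icc]
  have hshift : ∑ k ∈ Finset.range n, D (k + 1)
      ≤ (1 - a) * ∑ k ∈ Finset.range n, D k + ∑ k ∈ Finset.range n, b (k + 1) := by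
    rw [Finset.mul_sum, ← Finset.sum_add_distrib]
    exact Finset.sum_le_sum fun k hk => hrec k (by simp at hk; omega)
  have hlast : 0 ≤ (1 - a) * D n := mul_nonneg (by linarith) (hD n (by omega))
  rw [Nat.add_sub_cancel, hreindex]
  nlinarith [Finset.sum_range_succ' D n, Finset.sum_range_succ D n]

theorem stepSize_bounds {β mu γ ζ : ℝ} (hβ : 0 < β) (hmu : 0 < mu) (hγ0 : 0 < γ)
    (hγ1 : γ < min (1 / β) (1 / (2 * mu))) (hζ : ζ = γ - γ ^ 2 * β / 2) :
    0 < ζ ∧ 2 * mu * ζ ≤ 1 ∧ γ ^ 2 * β / 2 ≤ ζ * γ * β := by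
  have hγβ : γ * β < 1 := by
    have := hγ1.trans_le (min_le_left _ _); rwa [lt_div_iff₀ hβ] at this
  have hγmu : γ * (2 * mu) < 1 := by
    have := hγ1.trans_le (min_le_right _ _); rwa [lt_div_iff₀ (by positivity)] at this
  subst hζ
  refine ⟨by nlinarith, by nlinarith, ?_⟩
  nlinarith [mul_nonneg (mul_nonneg (sq_nonneg γ) hβ.le) (sub_nonneg.2 hγβ.le)]

/-- `Y k` is the iterate after `k` updates, i.e. the paper's `X (k + 1)`, as a function of the
first `k` samples. -/
theorem stmt8_general {n : ℕ} (T : ℕ) (hT : 1 ≤ T)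
    (β mu K : ℝ) (hβ : 0 < β) (hmu : 0 < mu)
    (F : ℕ → EuclideanSpace ℝ (Fin n) → ℝ) (Fs : ℕ → ℝ)
    (hFdiff : ∀ t, 1 ≤ t → t ≤ T → Differentiable ℝ (F t))
    (hFsmooth : ∀ t, 1 ≤ t → t ≤ T → ∀ u v : EuclideanSpace ℝ (Fin n),
      ‖gradient (F t) u - gradient (F t) v‖ ≤ β * ‖u - v‖)
    (hFs_lb : ∀ t, 1 ≤ t → t ≤ T → ∀ x, Fs t ≤ F t x)
    (hFs_att : ∀ t, 1 ≤ t → t ≤ T → ∃ x, F t x = Fs t)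
    (hPL : ∀ t, 1 ≤ t → t ≤ T → ∀ x,
      mu * (F t x - Fs t) ≤ (1 / 2) * ‖gradient (F t) x‖ ^ 2)
    (η J σ : ℕ → ℝ)
    (hdrift : ∀ t, 1 ≤ t → t ≤ T - 1 → ∀ x, |F (t + 1) x - F t x| ≤ K * η t)
    (Ω : ℕ → Type*) [∀ t, MeasurableSpace (Ω t)]
    (P : (t : ℕ) → Measure (Ω t)) [∀ t, IsProbabilityMeasure (P t)]
    (G : (t : ℕ) → EuclideanSpace ℝ (Fin n) → Ω t → EuclideanSpace ℝ (Fin n))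
    (hGmeas : ∀ t, 1 ≤ t → t ≤ T - 1 → Measurable (Function.uncurry (G t)))
    (hGint : ∀ t, 1 ≤ t → t ≤ T - 1 → ∀ x, Integrable (G t x) (P t))
    (hGmean : ∀ t, 1 ≤ t → t ≤ T - 1 → ∀ x, ∫ ω, G t x ω ∂(P t) = gradient (F t) x)
    (hGvar : ∀ t, 1 ≤ t → t ≤ T - 1 → ∀ x,
      (∫ ω, ‖G t x ω - gradient (F t) x‖ ^ 2 ∂(P t)) ≤ (σ t) ^ 2)
    (x1 : EuclideanSpace ℝ (Fin n)) (γ ζ : ℝ)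
    (hγ0 : 0 < γ) (hγ1 : γ < min (1 / β) (1 / (2 * mu)))
    (hζ : ζ = γ - γ ^ 2 * β / 2)
    (Y : (k : ℕ) → ((i : Fin k) → Ω (i + 1)) → EuclideanSpace ℝ (Fin n))
    (hY0 : ∀ ω, Y 0 ω = x1)
    (hYrec : ∀ k : ℕ, k + 1 < T → ∀ ω : (i : Fin (k + 1)) → Ω (i + 1),
      Y (k + 1) ω = Y k (fun i => ω i.castSucc)
        - γ • G (k + 1) (Y k (fun i => ω i.castSucc)) (ω (Fin.last k)))
    (hYmeas : ∀ k, k < T → Measurable (Y k))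
    (hFXint : ∀ k, k < T → Integrable (fun ω => F (k + 1) (Y k ω))
      (Measure.pi (fun i : Fin k => P (i + 1))))
    (hgradXint : ∀ k, k < T → Integrable (fun ω => ‖gradient (F (k + 1)) (Y k ω)‖ ^ 2)
      (Measure.pi (fun i : Fin k => P (i + 1))))
    (hGXint : ∀ k : ℕ, k + 1 < T →
      Integrable (fun ω : (i : Fin (k + 1)) → Ω (i + 1) =>
          ‖G (k + 1) (Y k (fun i => ω i.castSucc)) (ω (Fin.last k))‖ ^ 2)
        (Measure.pi (fun i : Fin (k + 1) => P (i + 1)))) :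
    ∑ k ∈ Finset.range T,
        (∫ ω, (F (k + 1) (Y k ω) - Fs (k + 1)) ∂(Measure.pi (fun i : Fin k => P (i + 1))))
      ≤ (1 / (2 * mu * ζ)) * (F 1 x1 - Fs 1)
        + (K / (mu * ζ)) * ∑ t ∈ Finset.Icc 1 (T - 1), η t
        + (1 / (4 * mu ^ 2 * ζ)) * ∑ t ∈ Finset.Icc 1 (T - 1), (J t) ^ 2
        + (γ * β / (2 * mu)) * ∑ t ∈ Finset.Icc 1 (T - 1), (σ t) ^ 2 := by
  obtain ⟨hζpos, hζmu, hσcoef⟩ := stepSize_bounds hβ hmu hγ0 hγ1 hζ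
  set D : ℕ → ℝ := fun k =>
    ∫ ω, (F (k + 1) (Y k ω) - Fs (k + 1)) ∂(Measure.pi fun i : Fin k => P (i + 1))
  have hD0 : D 0 = F 1 x1 - Fs 1 := by simp [D, hY0]
  have hD : ∀ k < T, 0 ≤ D k := fun k hk =>
    integral_nonneg fun ω => sub_nonneg.2 (hFs_lb (k + 1) (by omega) (by omega) _)
  have hrec : ∀ k, k + 1 < T → D (k + 1) ≤ (1 - 2 * mu * ζ) * D k
      + (2 * K * η (k + 1) + γ ^ 2 * β / 2 * σ (k + 1) ^ 2) := fun k hk => by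
    have h1 : 1 ≤ k + 1 := by omega
    have hT1 : k + 1 ≤ T - 1 := by omega
    have hT' : k + 1 ≤ T := by omega
    have := integral_sub_inf_sgd_step_le hβ.le (hζ ▸ hζpos.le) (hFdiff _ h1 hT')
      (hFsmooth _ h1 hT') (hFs_lb _ h1 hT') (hFs_att (k + 2) (by omega) hk) (hPL _ h1 hT')
      (hdrift _ h1 hT1) (hGmeas _ h1 hT1) (hGint _ h1 hT1) (hGmean _ h1 hT1) (hGvar _ h1 hT1)
      (hYrec k hk) (hYmeas k hT') (hYmeas _ hk) (hFXint k hT') (hgradXint k hT') (hGXint k hk)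
      (hFXint _ hk)
    rw [← hζ] at this
    linarith
  have hsum := mul_sum_range_le_of_le_mul_add (a := 2 * mu * ζ)
    (b := fun t => 2 * K * η t + γ ^ 2 * β / 2 * σ t ^ 2) hT hζmu hD hrec
  rw [hD0, Finset.sum_add_distrib, ← Finset.mul_sum, ← Finset.mul_sum] at hsum
  have hσsq : 0 ≤ ∑ t ∈ Finset.Icc 1 (T - 1), σ t ^ 2 := by positivity
  have hJsq : 0 ≤ 1 / (4 * mu ^ 2 * ζ) * ∑ t ∈ Finset.Icc 1 (T - 1), J t ^ 2 := by positivity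
  calc ∑ k ∈ Finset.range T, D k
      ≤ (F 1 x1 - Fs 1 + 2 * K * ∑ t ∈ Finset.Icc 1 (T - 1), η t
          + ζ * γ * β * ∑ t ∈ Finset.Icc 1 (T - 1), σ t ^ 2) / (2 * mu * ζ) := by
        rw [le_div_iff₀ (by positivity)]
        nlinarith [mul_le_mul_of_nonneg_right hσcoef hσsq]
    _ = 1 / (2 * mu * ζ) * (F 1 x1 - Fs 1) + K / (mu * ζ) * ∑ t ∈ Finset.Icc 1 (T - 1), η t
          + γ * β / (2 * mu) * ∑ t ∈ Finset.Icc 1 (T - 1), σ t ^ 2 := by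
        field_simp
    _ ≤ _ := by linarith

/-- **Regret bound of online stochastic gradient descent under the PL condition.**
For `t = 1, …, T` the losses `F t : ℝⁿ → ℝ` are differentiable, `β`-smooth, attain
their infima `Fs t` and satisfy the PL condition with constant `mu`.  Successive
losses drift by `K * η t` in value and by `J t` in gradient.  Unbiased stochastic
gradient oracles `G t` on probability spaces `(Ω t, P t)` have variance at most
`(σ t)²`.  The iterate after `k` updates is `Y k`, a function of the first `k`
samples (so `Y k` is the iterate `X (k+1)` of the paper), started at `x1` and
updated by `Y (k+1) ω = Y k ω' - γ • G (k+1) (Y k ω') (ω (Fin.last k))` where `ω'`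
drops the last sample.  With `γ ∈ (0, min(1/β, 1/(2 mu)))` and `ζ = γ - γ²β/2`,
the regret `Σₜ₌₁ᵀ E[Fₜ(Xₜ) - Fₜ*]` is bounded as stated. -/
theorem stmt8 {n : ℕ} (hn : 1 ≤ n) (T : ℕ) (hT : 1 ≤ T)
    (β mu K : ℝ) (hβ : 0 < β) (hmu : 0 < mu) (hK : 0 < K)
    (F : ℕ → EuclideanSpace ℝ (Fin n) → ℝ) (Fs : ℕ → ℝ)
    (hFdiff : ∀ t, 1 ≤ t → t ≤ T → Differentiable ℝ (F t))
    (hFsmooth : ∀ t, 1 ≤ t → t ≤ T → ∀ u v : EuclideanSpace ℝ (Fin n),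
      ‖gradient (F t) u - gradient (F t) v‖ ≤ β * ‖u - v‖)
    (hFs_lb : ∀ t, 1 ≤ t → t ≤ T → ∀ x, Fs t ≤ F t x)
    (hFs_att : ∀ t, 1 ≤ t → t ≤ T → ∃ x, F t x = Fs t)
    (hPL : ∀ t, 1 ≤ t → t ≤ T → ∀ x,
      mu * (F t x - Fs t) ≤ (1 / 2) * ‖gradient (F t) x‖ ^ 2)
    (η J σ : ℕ → ℝ)
    (hη : ∀ t, 1 ≤ t → t ≤ T - 1 → 0 < η t)
    (hJ : ∀ t, 1 ≤ t → t ≤ T - 1 → 0 ≤ J t)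
    (hσ : ∀ t, 1 ≤ t → t ≤ T - 1 → 0 ≤ σ t)
    (hdrift : ∀ t, 1 ≤ t → t ≤ T - 1 → ∀ x, |F (t + 1) x - F t x| ≤ K * η t)
    (hgradshift : ∀ t, 1 ≤ t → t ≤ T - 1 → ∀ x,
      ‖gradient (F (t + 1)) x - gradient (F t) x‖ ≤ J t)
    (Ω : ℕ → Type*) [∀ t, MeasurableSpace (Ω t)]
    (P : (t : ℕ) → Measure (Ω t)) [∀ t, IsProbabilityMeasure (P t)]
    (G : (t : ℕ) → EuclideanSpace ℝ (Fin n) → Ω t → EuclideanSpace ℝ (Fin n))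
    (hGmeas : ∀ t, 1 ≤ t → t ≤ T - 1 → Measurable (Function.uncurry (G t)))
    (hGint : ∀ t, 1 ≤ t → t ≤ T - 1 → ∀ x, Integrable (G t x) (P t))
    (hGmean : ∀ t, 1 ≤ t → t ≤ T - 1 → ∀ x, ∫ ω, G t x ω ∂(P t) = gradient (F t) x)
    (hGvar : ∀ t, 1 ≤ t → t ≤ T - 1 → ∀ x,
      (∫ ω, ‖G t x ω - gradient (F t) x‖ ^ 2 ∂(P t)) ≤ (σ t) ^ 2)
    (x1 : EuclideanSpace ℝ (Fin n)) (γ ζ : ℝ)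
    (hγ0 : 0 < γ) (hγ1 : γ < min (1 / β) (1 / (2 * mu)))
    (hζ : ζ = γ - γ ^ 2 * β / 2)
    (Y : (k : ℕ) → ((i : Fin k) → Ω (i + 1)) → EuclideanSpace ℝ (Fin n))
    (hY0 : ∀ ω, Y 0 ω = x1)
    (hYrec : ∀ k : ℕ, k + 1 < T → ∀ ω : (i : Fin (k + 1)) → Ω (i + 1),
      Y (k + 1) ω = Y k (fun i => ω i.castSucc)
        - γ • G (k + 1) (Y k (fun i => ω i.castSucc)) (ω (Fin.last k)))
    (hYmeas : ∀ k, k < T → Measurable (Y k))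
    (hFXint : ∀ k, k < T → Integrable (fun ω => F (k + 1) (Y k ω))
      (Measure.pi (fun i : Fin k => P (i + 1))))
    (hgradXint : ∀ k, k < T → Integrable (fun ω => ‖gradient (F (k + 1)) (Y k ω)‖ ^ 2)
      (Measure.pi (fun i : Fin k => P (i + 1))))
    (hGXint : ∀ k : ℕ, k + 1 < T →
      Integrable (fun ω : (i : Fin (k + 1)) → Ω (i + 1) =>
          ‖G (k + 1) (Y k (fun i => ω i.castSucc)) (ω (Fin.last k))‖ ^ 2)
        (Measure.pi (fun i : Fin (k + 1) => P (i + 1)))) :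
    ∑ k ∈ Finset.range T,
        (∫ ω, (F (k + 1) (Y k ω) - Fs (k + 1)) ∂(Measure.pi (fun i : Fin k => P (i + 1))))
      ≤ (1 / (2 * mu * ζ)) * (F 1 x1 - Fs 1)
        + (K / (mu * ζ)) * ∑ t ∈ Finset.Icc 1 (T - 1), η t
        + (1 / (4 * mu ^ 2 * ζ)) * ∑ t ∈ Finset.Icc 1 (T - 1), (J t) ^ 2
        + (γ * β / (2 * mu)) * ∑ t ∈ Finset.Icc 1 (T - 1), (σ t) ^ 2 :=
  stmt8_general T hT β mu K hβ hmu F Fs hFdiff hFsmooth hFs_lb hFs_att hPL η J σ hdrift Ω P G hGmeas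
    hGint hGmean hGvar x1 γ ζ hγ0 hγ1 hζ Y hY0 hYrec hYmeas hFXint hgradXint hGXint
end

section
/- Let F₁, F₂ : ℝⁿ → ℝ be differentiable, let R : ℝⁿ → ℝ be convex, and set G₁ = F₁ + R, G₂ = F₂ + R. Fix β > 0 and define, for a differentiable F and δ > 0, D_R(F; x, δ) := −2δ · inf_y { ⟨∇F(x), y − x⟩ + (δ/2)‖y − x‖² + R(y) − R(x) }. Suppose: G₂ attains its infimum G₂* = inf G₂ and satisfies the proximal PL condition with constant μ > 0 at parameter β, i.e., (1/2) D_R(F₂; x, β) ≥ μ(G₂(x) − G₂*) for all x; G₁ attains its infimum G₁* at some point x₁* ∈ ℝⁿ; |G₂(x) − G₁(x)| ≤ Kη for all x (K, η > 0); and ‖∇F₂(x) − ∇F₁(x)‖ ≤ J for all x (J ≥ 0). Then G₁* − G₂* ≤ Kη + J²/(2μ). -/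
/-!
At a minimiser `x₁` of `G₁ = F₁ + R`, convexity of `R` gives the first-order condition
`0 ≤ ⟪∇F₁(x₁), y - x₁⟫ + R y - R x₁` for all `y`. Replacing `∇F₁` by `∇F₂` costs at most
`‖∇F₂ - ∇F₁‖ ‖y - x₁‖`, which the quadratic term `(β/2)‖y - x₁‖²` absorbs up to `J²/(2β)`,
so `D_R(F₂; x₁, β) ≤ J²`. The proximal PL inequality then gives `G₂(x₁) - G₂* ≤ J²/(2μ)`, and
`G₁* = G₁(x₁) ≤ G₂(x₁) + Kη`.
-/

open Set
open scoped RealInnerProductSpace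

/-- The forward-backward envelope quantity
`D_R(F; x, δ) = -2δ · inf_y { ⟪∇F(x), y - x⟫ + (δ/2)‖y - x‖² + R(y) - R(x) }`
used in the proximal Polyak–Łojasiewicz condition. -/
noncomputable def DR {n : ℕ} (F R : EuclideanSpace ℝ (Fin n) → ℝ)
    (x : EuclideanSpace ℝ (Fin n)) (δ : ℝ) : ℝ :=
  -2 * δ * (⨅ y : EuclideanSpace ℝ (Fin n),
    (⟪gradient F x, y - x⟫ + δ / 2 * ‖y - x‖ ^ 2 + R y - R x))

theorem IsMinOn.nonneg_of_hasFDerivAt_add_convexOn {E : Type*} [NormedAddCommGroup E]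
    [NormedSpace ℝ E] {F R : E → ℝ} {F' : StrongDual ℝ E} {x : E}
    (hmin : IsMinOn (F + R) univ x) (hF : HasFDerivAt F F' x) (hR : ConvexOn ℝ univ R)
    (y : E) : 0 ≤ F' (y - x) + R y - R x := by
  -- `φ` majorises `t ↦ (F + R) (x + t • (y - x)) - R x` on `[0, 1]` since `R` lies below its chords.
  set φ : ℝ → ℝ := fun t ↦ F (x + t • (y - x)) + t * (R y - R x)
  have hφ : HasDerivAt φ (F' (y - x) + (R y - R x)) 0 := by
    have hline : HasDerivAt (fun t : ℝ ↦ x + t • (y - x)) (y - x) 0 := by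
      simpa using ((hasDerivAt_id (0 : ℝ)).smul_const (y - x)).const_add x
    have hF0 : HasFDerivAt F F' (x + (0 : ℝ) • (y - x)) := by simpa using hF
    have h := (hF0.comp_hasDerivAt 0 hline).add ((hasDerivAt_id (0 : ℝ)).mul_const (R y - R x))
    rwa [one_mul] at h
  have hφmin : IsMinOn φ (Icc 0 1) 0 := by
    intro t ⟨ht0, ht1⟩
    have hRt : R (x + t • (y - x)) ≤ (1 - t) * R x + t * R y := by
      have : x + t • (y - x) = (1 - t) • x + t • y := by module
      rw [this]
      exact hR.2 (mem_univ x) (mem_univ y) (by linarith) ht0 (by ring)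
    have := isMinOn_univ_iff.mp hmin (x + t • (y - x))
    simp only [Pi.add_apply] at this
    simp only [φ, mem_ofPred_eq, zero_smul, add_zero, zero_mul]
    nlinarith
  have h1 : (1 : ℝ) ∈ posTangentConeAt (Icc 0 1) 0 :=
    mem_posTangentConeAt_of_segment_subset (by simp [segment_eq_Icc])
  simpa [add_sub_assoc] using
    hφmin.localize.hasFDerivWithinAt_nonneg hφ.hasFDerivAt.hasFDerivWithinAt h1

theorem neg_norm_sq_div_le_inner_add {E : Type*} [NormedAddCommGroup E]
    [InnerProductSpace ℝ E] {β : ℝ} (hβ : 0 < β) (u v : E) :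
    -(‖u‖ ^ 2 / (2 * β)) ≤ ⟪u, v⟫ + β / 2 * ‖v‖ ^ 2 := by
  have hsq : ⟪u, v⟫ + β / 2 * ‖v‖ ^ 2 + ‖u‖ ^ 2 / (2 * β) = ‖u + β • v‖ ^ 2 / (2 * β) := by
    rw [norm_add_sq_real, inner_smul_right, norm_smul, Real.norm_of_nonneg hβ.le]
    field_simp
    ring
  have : 0 ≤ ‖u + β • v‖ ^ 2 / (2 * β) := by positivity
  linarith

theorem DR_le_norm_sub_sq {n : ℕ} {F R : EuclideanSpace ℝ (Fin n) → ℝ}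
    {x g : EuclideanSpace ℝ (Fin n)} {β : ℝ} (hβ : 0 < β)
    (hg : ∀ y, 0 ≤ ⟪g, y - x⟫ + R y - R x) : DR F R x β ≤ ‖gradient F x - g‖ ^ 2 := by
  have hinf : -(‖gradient F x - g‖ ^ 2 / (2 * β)) ≤
      ⨅ y, (⟪gradient F x, y - x⟫ + β / 2 * ‖y - x‖ ^ 2 + R y - R x) := by
    refine le_ciInf fun y ↦ ?_
    have := neg_norm_sq_div_le_inner_add hβ (gradient F x - g) (y - x)
    rw [inner_sub_left] at this
    linarith [hg y]
  calc DR F R x β ≤ -2 * β * -(‖gradient F x - g‖ ^ 2 / (2 * β)) :=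
        mul_le_mul_of_nonpos_left hinf (by linarith)
    _ = ‖gradient F x - g‖ ^ 2 := by field_simp

theorem stmt10_general {n : ℕ} (β μ K η J : ℝ)
    (hβ : 0 < β) (hμ : 0 < μ)
    (F₁ F₂ R : EuclideanSpace ℝ (Fin n) → ℝ)
    (hF₁ : Differentiable ℝ F₁)
    (hR : ConvexOn ℝ Set.univ R)
    (G2s : ℝ)
    (hproxPL : ∀ x, μ * ((F₂ x + R x) - G2s) ≤ (1 / 2) * DR F₂ R x β)
    (G1s : ℝ) (x1star : EuclideanSpace ℝ (Fin n))
    (hG1_att : F₁ x1star + R x1star = G1s) (hG1_lb : ∀ x, G1s ≤ F₁ x + R x)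
    (hclose : ∀ x, |(F₂ x + R x) - (F₁ x + R x)| ≤ K * η)
    (hgrad : ∀ x, ‖gradient F₂ x - gradient F₁ x‖ ≤ J) :
    G1s - G2s ≤ K * η + J ^ 2 / (2 * μ) := by
  have hmin : IsMinOn (F₁ + R) univ x1star :=
    isMinOn_univ_iff.mpr fun x ↦ hG1_att.trans_le (hG1_lb x)
  have hopt : ∀ y, 0 ≤ ⟪gradient F₁ x1star, y - x1star⟫ + R y - R x1star := by
    simpa only [InnerProductSpace.toDual_apply_apply] using
      hmin.nonneg_of_hasFDerivAt_add_convexOn (hF₁ x1star).hasGradientAt.hasFDerivAt hR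
  have hDR : DR F₂ R x1star β ≤ J ^ 2 :=
    (DR_le_norm_sub_sq hβ hopt).trans (pow_le_pow_left₀ (norm_nonneg _) (hgrad x1star) 2)
  have hgap : F₂ x1star + R x1star - G2s ≤ J ^ 2 / (2 * μ) := by
    rw [le_div_iff₀ (by positivity)]
    linarith [hproxPL x1star]
  linarith [(abs_le.mp (hclose x1star)).1]

/-- **Difference of successive optimal values under the proximal PL condition.**
With `G₁ = F₁ + R`, `G₂ = F₂ + R` (`R` convex), if `G₂` attains its infimum `G2s`
and satisfies the proximal PL condition with constant `μ > 0` at parameter `β`,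
`G₁` attains its infimum `G1s` at `x1star`, `|G₂ - G₁| ≤ K η` pointwise and
`‖∇F₂ - ∇F₁‖ ≤ J` pointwise, then `G1s - G2s ≤ K η + J²/(2μ)`. -/
theorem stmt10 {n : ℕ} (β μ K η J : ℝ)
    (hβ : 0 < β) (hμ : 0 < μ) (hK : 0 < K) (hη : 0 < η) (hJ : 0 ≤ J)
    (F₁ F₂ R : EuclideanSpace ℝ (Fin n) → ℝ)
    (hF₁ : Differentiable ℝ F₁) (hF₂ : Differentiable ℝ F₂)
    (hR : ConvexOn ℝ Set.univ R)
    (G2s : ℝ) (hG2_lb : ∀ x, G2s ≤ F₂ x + R x) (hG2_att : ∃ x, F₂ x + R x = G2s)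
    (hproxPL : ∀ x, μ * ((F₂ x + R x) - G2s) ≤ (1 / 2) * DR F₂ R x β)
    (G1s : ℝ) (x1star : EuclideanSpace ℝ (Fin n))
    (hG1_att : F₁ x1star + R x1star = G1s) (hG1_lb : ∀ x, G1s ≤ F₁ x + R x)
    (hclose : ∀ x, |(F₂ x + R x) - (F₁ x + R x)| ≤ K * η)
    (hgrad : ∀ x, ‖gradient F₂ x - gradient F₁ x‖ ≤ J) :
    G1s - G2s ≤ K * η + J ^ 2 / (2 * μ) :=
  stmt10_general β μ K η J hβ hμ F₁ F₂ R hF₁ hR G2s hproxPL G1s x1star hG1_att hG1_lb hclose hgrad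
end

section
/- Let F₁, F₂ : ℝⁿ → ℝ be differentiable, R : ℝⁿ → ℝ convex, G₁ = F₁ + R, G₂ = F₂ + R, and β > 0. Suppose: G₂ attains its infimum G₂* on a nonempty set of minimizers X₂*, satisfies the proximal PL condition with constant μ > 0 at parameter β ((1/2) D_R(F₂; x, β) ≥ μ(G₂(x) − G₂*) for all x), and satisfies the quadratic growth condition (ξ/2)·dist(x, X₂*)² ≤ G₂(x) − G₂* for all x, for some ξ > 0; G₁ attains its infimum at some x₁* ∈ ℝⁿ; and ‖∇F₂(x) − ∇F₁(x)‖ ≤ J for all x. Then dist(x₁*, X₂*)² ≤ J²/(ξμ). -/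
open MeasureTheory
open scoped RealInnerProductSpace BigOperators

/-!
The minimizer `x₁*` of `G₁ = F₁ + R` satisfies the first-order condition
`0 ≤ ⟪∇F₁ x₁*, y - x₁*⟫ + R y - R x₁*`. Replacing `∇F₁` by `∇F₂` costs at most `J ‖y - x₁*‖`, and
completing the square against `β/2 ‖y - x₁*‖²` bounds every term of the infimum defining
`D_R(F₂; x₁*, β)` below by `-J²/(2β)`, so `D_R(F₂; x₁*, β) ≤ J²`. The proximal PL condition then
gives `G₂(x₁*) - G₂* ≤ J²/(2μ)`, and quadratic growth turns this into the bound on the distance.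
-/

section FirstOrder

variable {E : Type*} [NormedAddCommGroup E] {F R : E → ℝ} {x : E}

theorem HasFDerivAt.zero_le_apply_sub_add_sub_of_isMinOn [NormedSpace ℝ E] {f' : E →L[ℝ] ℝ}
    (hF : HasFDerivAt F f' x) (hR : ConvexOn ℝ Set.univ R)
    (hmin : IsMinOn (fun z => F z + R z) Set.univ x) (y : E) :
    0 ≤ f' (y - x) + (R y - R x) := by
  -- `R` lies below its chord on `[x, y]`, so `x` still minimizes `F` plus that chord along the
  -- segment, and the one-sided derivative at `t = 0` is nonnegative.
  set φ : ℝ → ℝ := fun t => F (x + t • (y - x)) + t * (R y - R x)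
  have hφ : HasDerivAt φ (f' (y - x) + (R y - R x)) 0 := by
    have hline : HasDerivAt (fun t : ℝ => x + t • (y - x)) (y - x) 0 := by
      simpa using ((hasDerivAt_id (0 : ℝ)).smul_const (y - x)).const_add x
    have hF0 : HasFDerivAt F f' (x + (0 : ℝ) • (y - x)) := by simpa using hF
    exact (hF0.comp_hasDerivAt 0 hline).add (hasDerivAt_mul_const (R y - R x))
  have hφmin : IsMinOn φ (Set.Icc 0 1) 0 := by
    intro t ⟨ht0, ht1⟩
    have hchord : R (x + t • (y - x)) ≤ (1 - t) * R x + t * R y := by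
      have h := hR.2 (Set.mem_univ x) (Set.mem_univ y) (sub_nonneg.2 ht1) ht0 (by ring)
      have hpt : (1 - t) • x + t • y = x + t • (y - x) := by module
      simpa only [hpt, smul_eq_mul] using h
    have := isMinOn_univ_iff.1 hmin (x + t • (y - x))
    show φ 0 ≤ φ t
    simp only [φ, zero_smul, add_zero, zero_mul]
    linarith
  have hcone : (1 : ℝ) ∈ posTangentConeAt (Set.Icc 0 1) 0 :=
    mem_posTangentConeAt_of_segment_subset (by rw [zero_add, segment_eq_Icc zero_le_one])
  simpa using hφmin.localize.hasFDerivWithinAt_nonneg hφ.hasFDerivAt.hasFDerivWithinAt hcone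

theorem DifferentiableAt.zero_le_inner_gradient_add_sub_of_isMinOn [InnerProductSpace ℝ E]
    [CompleteSpace E] (hF : DifferentiableAt ℝ F x) (hR : ConvexOn ℝ Set.univ R)
    (hmin : IsMinOn (fun z => F z + R z) Set.univ x) (y : E) :
    0 ≤ ⟪gradient F x, y - x⟫ + (R y - R x) :=
  (hasGradientAt_iff_hasFDerivAt.1 hF.hasGradientAt).zero_le_apply_sub_add_sub_of_isMinOn hR hmin y

end FirstOrder

theorem neg_sq_norm_div_le_inner_add_mul_sq_norm {E : Type*} [NormedAddCommGroup E]
    [InnerProductSpace ℝ E] {β : ℝ} (hβ : 0 < β) (a v : E) :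
    -(‖a‖ ^ 2 / (2 * β)) ≤ ⟪a, v⟫ + β / 2 * ‖v‖ ^ 2 := by
  have hsquare : ⟪a, v⟫ + β / 2 * ‖v‖ ^ 2 + ‖a‖ ^ 2 / (2 * β) = ‖a + β • v‖ ^ 2 / (2 * β) := by
    rw [norm_add_sq_real, real_inner_smul_right, norm_smul, mul_pow, Real.norm_of_nonneg hβ.le]
    field_simp
    ring
  have := div_nonneg (sq_nonneg ‖a + β • v‖) (by positivity : (0 : ℝ) ≤ 2 * β)
  linarith

theorem DR_le_sq_of_forall_zero_le_inner_add_sub {n : ℕ} {F R : EuclideanSpace ℝ (Fin n) → ℝ}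
    {x g : EuclideanSpace ℝ (Fin n)} {β J : ℝ} (hβ : 0 < β)
    (hopt : ∀ y, 0 ≤ ⟪g, y - x⟫ + (R y - R x)) (hJ : ‖gradient F x - g‖ ≤ J) :
    DR F R x β ≤ J ^ 2 := by
  have hterm : ∀ y,
      -(J ^ 2 / (2 * β)) ≤ ⟪gradient F x, y - x⟫ + β / 2 * ‖y - x‖ ^ 2 + R y - R x := by
    intro y
    have hsplit : ⟪gradient F x, y - x⟫ = ⟪gradient F x - g, y - x⟫ + ⟪g, y - x⟫ := by
      rw [← inner_add_left, sub_add_cancel]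
    have hsq := neg_sq_norm_div_le_inner_add_mul_sq_norm hβ (gradient F x - g) (y - x)
    have hJsq : ‖gradient F x - g‖ ^ 2 / (2 * β) ≤ J ^ 2 / (2 * β) := by gcongr
    linarith [hopt y]
  have hinf := mul_le_mul_of_nonneg_left (le_ciInf hterm) (by positivity : (0 : ℝ) ≤ 2 * β)
  have hcancel : 2 * β * (J ^ 2 / (2 * β)) = J ^ 2 := by field_simp
  unfold DR
  linarith

theorem stmt11_general {n : ℕ} (β μ ξ J : ℝ)
    (hβ : 0 < β) (hμ : 0 < μ) (hξ : 0 < ξ)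
    (F₁ F₂ R : EuclideanSpace ℝ (Fin n) → ℝ)
    (hF₁ : Differentiable ℝ F₁)
    (hR : ConvexOn ℝ Set.univ R)
    (G2s : ℝ)
    (hproxPL : ∀ x, μ * ((F₂ x + R x) - G2s) ≤ (1 / 2) * DR F₂ R x β)
    (hQG : ∀ x, ξ / 2 * (Metric.infDist x {y | F₂ y + R y = G2s}) ^ 2
      ≤ (F₂ x + R x) - G2s)
    (x1star : EuclideanSpace ℝ (Fin n))
    (hG1_att : ∀ x, F₁ x1star + R x1star ≤ F₁ x + R x)
    (hgrad : ∀ x, ‖gradient F₂ x - gradient F₁ x‖ ≤ J) :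
    (Metric.infDist x1star {y | F₂ y + R y = G2s}) ^ 2 ≤ J ^ 2 / (ξ * μ) := by
  have hopt := (hF₁ x1star).zero_le_inner_gradient_add_sub_of_isMinOn hR
    (isMinOn_univ_iff.2 hG1_att)
  have hDR : DR F₂ R x1star β ≤ J ^ 2 :=
    DR_le_sq_of_forall_zero_le_inner_add_sub hβ hopt (hgrad x1star)
  have hQGμ := mul_le_mul_of_nonneg_left (hQG x1star) hμ.le
  rw [le_div_iff₀ (mul_pos hξ hμ)]
  linarith [hproxPL x1star]

/-- **Distance between successive optimal sets under the proximal PL condition.**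
With `G₁ = F₁ + R`, `G₂ = F₂ + R` (`R` convex), if `G₂` attains its infimum `G2s`
on a nonempty minimizer set `X₂*`, satisfies the proximal PL condition with constant
`μ > 0` at parameter `β` and the quadratic growth condition with constant `ξ > 0`,
`G₁` attains its infimum at `x1star`, and `‖∇F₂ - ∇F₁‖ ≤ J` pointwise, then
`dist(x1star, X₂*)² ≤ J²/(ξμ)`. -/
theorem stmt11 {n : ℕ} (β μ ξ J : ℝ)
    (hβ : 0 < β) (hμ : 0 < μ) (hξ : 0 < ξ) (hJ : 0 ≤ J)
    (F₁ F₂ R : EuclideanSpace ℝ (Fin n) → ℝ)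
    (hF₁ : Differentiable ℝ F₁) (hF₂ : Differentiable ℝ F₂)
    (hR : ConvexOn ℝ Set.univ R)
    (G2s : ℝ) (hG2_lb : ∀ x, G2s ≤ F₂ x + R x) (hG2_att : ∃ x, F₂ x + R x = G2s)
    (hproxPL : ∀ x, μ * ((F₂ x + R x) - G2s) ≤ (1 / 2) * DR F₂ R x β)
    (hQG : ∀ x, ξ / 2 * (Metric.infDist x {y | F₂ y + R y = G2s}) ^ 2
      ≤ (F₂ x + R x) - G2s)
    (x1star : EuclideanSpace ℝ (Fin n))
    (hG1_att : ∀ x, F₁ x1star + R x1star ≤ F₁ x + R x)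
    (hgrad : ∀ x, ‖gradient F₂ x - gradient F₁ x‖ ≤ J) :
    (Metric.infDist x1star {y | F₂ y + R y = G2s}) ^ 2 ≤ J ^ 2 / (ξ * μ) :=
  stmt11_general β μ ξ J hβ hμ hξ F₁ F₂ R hF₁ hR G2s hproxPL hQG x1star hG1_att hgrad
end

section
/- Let α ∈ (0, 1] and let a, a*, h, h* be real numbers. Then (h + (1/α)·max(a − h, 0)) − (h* + (1/α)·max(a* − h*, 0)) ≤ (h* − h)·((1/α)·𝟙[a > h] − 1) + (1/α)·𝟙[a > h]·(a − a*), where 𝟙[a > h] equals 1 if a > h and 0 otherwise. -/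
/-- **Pointwise CVaR inequality.**
For `α ∈ (0,1]` and reals `a, a*, h, h*`:
`(h + (1/α)(a - h)₊) - (h* + (1/α)(a* - h*)₊)
  ≤ (h* - h)((1/α)𝟙[a > h] - 1) + (1/α)𝟙[a > h](a - a*)`. -/
theorem stmt14 (α a astar h hstar : ℝ) (hα0 : 0 < α) (hα1 : α ≤ 1) :
    (h + (1 / α) * max (a - h) 0) - (hstar + (1 / α) * max (astar - hstar) 0)
      ≤ (hstar - h) * ((1 / α) * (if a > h then (1 : ℝ) else 0) - 1)
        + (1 / α) * (if a > h then (1 : ℝ) else 0) * (a - astar) := by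
  have hinv : 0 < 1 / α := by positivity
  have hM : astar - hstar ≤ max (astar - hstar) 0 := le_max_left _ _
  have hM0 : (0:ℝ) ≤ max (astar - hstar) 0 := le_max_right _ _
  split_ifs with hc
  · have : max (a - h) 0 = a - h := max_eq_left (by linarith)
    rw [this]
    nlinarith [mul_le_mul_of_nonneg_left hM (le_of_lt hinv)]
  · have : max (a - h) 0 = 0 := max_eq_right (by push_neg at hc; linarith)
    rw [this]
    nlinarith [mul_le_mul_of_nonneg_left hM0 (le_of_lt hinv)]
end

section
/- Let (Ω, 𝒜, P) be a probability space, α ∈ (0, 1], h, h* ∈ ℝ, and let a, a* : Ω → ℝ be measurable functions such that a, a*, (a − h)₊ and (a* − h*)₊ are P-integrable. Let A = {ω ∈ Ω : a(ω) > h}. Then ∫ (h + (1/α)(a(ω) − h)₊) dP(ω) − ∫ (h* + (1/α)(a*(ω) − h*)₊) dP(ω) ≤ (h* − h)·(P(A)/α − 1) + (1/α) ∫_A (a(ω) − a*(ω)) dP(ω). -/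
/-!
On `A = {a > h}` the positive part `(a - h)₊` coincides with `a - h` and it vanishes off `A`,
so `L_α(h) = h + (1/α) ∫_A (a - h)`. For the competitor only the lower bound
`∫ (a* - h*)₊ ≥ ∫_A (a* - h*)` is available, and it enters with the nonnegative weight `1/α`.
Subtracting and regrouping the constants gives the bound.
-/

open MeasureTheory

namespace MeasureTheory

variable {Ω : Type*} [MeasurableSpace Ω] {μ : Measure Ω}

theorem integral_max_sub_zero_eq_setIntegral {f : Ω → ℝ} (hf : AEMeasurable f μ) (c : ℝ) :
    ∫ x, max (f x - c) 0 ∂μ = ∫ x in {x | f x > c}, (f x - c) ∂μ := by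
  have hA : NullMeasurableSet {x | f x > c} μ := nullMeasurableSet_lt aemeasurable_const hf
  calc ∫ x, max (f x - c) 0 ∂μ = ∫ x in {x | f x > c}, max (f x - c) 0 ∂μ :=
        (setIntegral_eq_integral_of_forall_compl_eq_zero fun _ hx =>
          max_eq_right (sub_nonpos.2 (not_lt.1 hx))).symm
    _ = ∫ x in {x | f x > c}, (f x - c) ∂μ :=
        setIntegral_congr_fun₀ hA fun _ hx => max_eq_left (sub_nonneg.2 (le_of_lt hx))

theorem setIntegral_le_integral_max_zero {f : Ω → ℝ} (hf : Integrable f μ) (s : Set Ω) :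
    ∫ x in s, f x ∂μ ≤ ∫ x, max (f x) 0 ∂μ :=
  calc ∫ x in s, f x ∂μ ≤ ∫ x in s, max (f x) 0 ∂μ :=
        setIntegral_mono hf.integrableOn hf.pos_part.integrableOn fun _ => le_max_left _ _
    _ ≤ ∫ x, max (f x) 0 ∂μ :=
        setIntegral_le_integral hf.pos_part (Filter.Eventually.of_forall fun _ => le_max_right _ _)

theorem setIntegral_sub_const [IsFiniteMeasure μ] {f : Ω → ℝ} {s : Set Ω}
    (hf : IntegrableOn f s μ) (c : ℝ) :
    ∫ x in s, (f x - c) ∂μ = ∫ x in s, f x ∂μ - μ.real s * c := by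
  rw [integral_sub hf (integrable_const c), setIntegral_const, smul_eq_mul]

end MeasureTheory

noncomputable def cvarObjective {Ω : Type*} [MeasurableSpace Ω] (P : Measure Ω) (α : ℝ)
    (a : Ω → ℝ) (h : ℝ) : ℝ :=
  ∫ ω, (h + (1 / α) * max (a ω - h) 0) ∂P

section CVaR

variable {Ω : Type*} [MeasurableSpace Ω] {P : Measure Ω} [IsProbabilityMeasure P]
  {α : ℝ} {a : Ω → ℝ}

theorem cvarObjective_eq (ha : Integrable a P) (h : ℝ) :
    cvarObjective P α a h = h + (1 / α) * ∫ ω, max (a ω - h) 0 ∂P := by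
  have hpos : Integrable (fun ω => max (a ω - h) 0) P := (ha.sub (integrable_const h)).pos_part
  rw [cvarObjective, integral_add (integrable_const h) (hpos.const_mul _), integral_const_mul]
  simp

theorem cvarObjective_eq_add_setIntegral (ha : Integrable a P) (h : ℝ) :
    cvarObjective P α a h = h + (1 / α) * ∫ ω in {ω | a ω > h}, (a ω - h) ∂P := by
  rw [cvarObjective_eq ha, integral_max_sub_zero_eq_setIntegral ha.aemeasurable]

theorem cvarObjective_ge_add_setIntegral (hα : 0 ≤ α) (ha : Integrable a P) (h : ℝ)
    (s : Set Ω) : h + (1 / α) * ∫ ω in s, (a ω - h) ∂P ≤ cvarObjective P α a h := by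
  rw [cvarObjective_eq ha]
  gcongr
  exact setIntegral_le_integral_max_zero (ha.sub (integrable_const h)) s

end CVaR

theorem stmt15_general {Ω : Type*} [MeasurableSpace Ω] (P : Measure Ω) [IsProbabilityMeasure P]
    (α h hstar : ℝ) (hα0 : 0 < α)
    (a astar : Ω → ℝ)
    (hint_a : Integrable a P) (hint_astar : Integrable astar P) :
    (∫ ω, (h + (1 / α) * max (a ω - h) 0) ∂P)
        - (∫ ω, (hstar + (1 / α) * max (astar ω - hstar) 0) ∂P)
      ≤ (hstar - h) * ((P {ω | a ω > h}).toReal / α - 1)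
        + (1 / α) * ∫ ω in {ω | a ω > h}, (a ω - astar ω) ∂P := by
  set A := {ω | a ω > h}
  calc cvarObjective P α a h - cvarObjective P α astar hstar
      ≤ (h + (1 / α) * ∫ ω in A, (a ω - h) ∂P)
          - (hstar + (1 / α) * ∫ ω in A, (astar ω - hstar) ∂P) := by
        rw [cvarObjective_eq_add_setIntegral hint_a]
        gcongr
        exact cvarObjective_ge_add_setIntegral hα0.le hint_astar hstar A
    _ = _ := by
        rw [setIntegral_sub_const hint_a.integrableOn, setIntegral_sub_const hint_astar.integrableOn,
          integral_sub hint_a.integrableOn hint_astar.integrableOn, Measure.real]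
        ring

/-- **Expectation-level CVaR inequality.**
For a probability measure `P`, `α ∈ (0,1]`, levels `h, h*` and integrable losses
`a, a*` with integrable positive parts, setting `A = {ω | a ω > h}`:
`∫ (h + (1/α)(a - h)₊) dP - ∫ (h* + (1/α)(a* - h*)₊) dP
  ≤ (h* - h)(P(A)/α - 1) + (1/α) ∫_A (a - a*) dP`. -/
theorem stmt15 {Ω : Type*} [MeasurableSpace Ω] (P : Measure Ω) [IsProbabilityMeasure P]
    (α h hstar : ℝ) (hα0 : 0 < α) (hα1 : α ≤ 1)
    (a astar : Ω → ℝ) (ha : Measurable a) (hastar : Measurable astar)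
    (hint_a : Integrable a P) (hint_astar : Integrable astar P)
    (hint_pos : Integrable (fun ω => max (a ω - h) 0) P)
    (hint_poss : Integrable (fun ω => max (astar ω - hstar) 0) P) :
    (∫ ω, (h + (1 / α) * max (a ω - h) 0) ∂P)
        - (∫ ω, (hstar + (1 / α) * max (astar ω - hstar) 0) ∂P)
      ≤ (hstar - h) * ((P {ω | a ω > h}).toReal / α - 1)
        + (1 / α) * ∫ ω in {ω | a ω > h}, (a ω - astar ω) ∂P :=
  stmt15_general P α h hstar hα0 a astar hint_a hint_astar
end
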